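/- arXiv:1210.1757 — 2 statements merged into one kernel-verified Lean document; each statement's English description precedes it below -/
import Mathlib

section
/- For every real v > 1/2 and every tie-breaking rule, the pair (μ*, ν*) is a mixed Nash equilibrium of the AND–OR game, and its utilities are U_and(μ*, ν*) = 0 and U_or(μ*, ν*) = v − 1/2. -/
open MeasureTheory Set
open scoped ENNReal

noncomputable section

/-- A bid profile for one player: a bid on each of the two items. -/
abbrev Bid := ℝ × ℝ

/-- The maximum allowed bid `H = max 1 v`. -/
def Hval (v : ℝ) : ℝ := max 1 v

/-- The set of allowed bids `[0,H] × [0,H]`. -/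
def box (v : ℝ) : Set Bid := Icc (0:ℝ) (Hval v) ×ˢ Icc (0:ℝ) (Hval v)

/-- A tie-breaking rule: measurable functions `t₁ t₂ : ℝ → [0,1]`, where `tᵢ x` is the
probability that AND wins item `i` when both players bid `x` on it. -/
structure TieRule where
  t1 : ℝ → ℝ
  t2 : ℝ → ℝ
  meas1 : Measurable t1
  meas2 : Measurable t2
  t1_nonneg : ∀ x, 0 ≤ t1 x
  t1_le_one : ∀ x, t1 x ≤ 1
  t2_nonneg : ∀ x, 0 ≤ t2 x
  t2_le_one : ∀ x, t2 x ≤ 1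

/-- Probability that AND wins item 1 with bids `a` (AND) and `b` (OR). -/
def q1 (T : TieRule) (a b : Bid) : ℝ :=
  if b.1 < a.1 then 1 else if a.1 = b.1 then T.t1 a.1 else 0

/-- Probability that AND wins item 2 with bids `a` (AND) and `b` (OR). -/
def q2 (T : TieRule) (a b : Bid) : ℝ :=
  if b.2 < a.2 then 1 else if a.2 = b.2 then T.t2 a.2 else 0

/-- Expected utility of the AND player at the pure profile `(a,b)`. -/
def uAnd (T : TieRule) (a b : Bid) : ℝ :=
  q1 T a b * q2 T a b - a.1 * q1 T a b - a.2 * q2 T a b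

/-- Expected utility of the OR player at the pure profile `(a,b)`. -/
def uOr (v : ℝ) (T : TieRule) (a b : Bid) : ℝ :=
  v * (1 - q1 T a b * q2 T a b) - b.1 * (1 - q1 T a b) - b.2 * (1 - q2 T a b)

/-- A mixed strategy: a Borel probability measure on `ℝ × ℝ` supported in the box. -/
def IsMixed (v : ℝ) (μ : Measure Bid) : Prop :=
  IsProbabilityMeasure μ ∧ μ (box v) = 1

/-- Expected utility of AND under mixed strategies. -/
def UAnd (T : TieRule) (μ ν : Measure Bid) : ℝ :=
  ∫ p, uAnd T p.1 p.2 ∂(μ.prod ν)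

/-- Expected utility of OR under mixed strategies. -/
def UOr (v : ℝ) (T : TieRule) (μ ν : Measure Bid) : ℝ :=
  ∫ p, uOr v T p.1 p.2 ∂(μ.prod ν)

/-- `(μ,ν)` is a mixed Nash equilibrium of the AND–OR game. -/
def IsNash (v : ℝ) (T : TieRule) (μ ν : Measure Bid) : Prop :=
  IsMixed v μ ∧ IsMixed v ν ∧
  (∀ a ∈ box v, (∫ b, uAnd T a b ∂ν) ≤ UAnd T μ ν) ∧
  (∀ b ∈ box v, (∫ a, uOr v T a b ∂μ) ≤ UOr v T μ ν)

/-- The uniform probability measure on `[0,1] ⊆ ℝ`. -/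
def P01 : Measure ℝ := volume.restrict (Icc (0:ℝ) 1)

/-- The OR equilibrium strategy `ν*`: bid `(x,0)` or `(0,x)` with probability `1/2` each,
where `x ∈ [0,1/2]` has CDF `x/(1-x)`. -/
def nuStar : Measure Bid :=
  (1/2 : ℝ≥0∞) • Measure.map (fun u => (u/(1+u), (0:ℝ))) P01 +
  (1/2 : ℝ≥0∞) • Measure.map (fun u => ((0:ℝ), u/(1+u))) P01

/-- Inverse-CDF map for the AND equilibrium bid distribution. -/
def gAnd (v u : ℝ) : ℝ := if 0 < u then max 0 (v - (v - 1/2)/u) else 0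

/-- The AND equilibrium strategy `μ*`: bid `(y,y)` where `y ∈ [0,1/2]` has CDF
`(v-1/2)/(v-y)`, with an atom of mass `1 - 1/(2v)` at `0`. -/
def muStar (v : ℝ) : Measure Bid := Measure.map (fun u => (gAnd v u, gAnd v u)) P01

/-!
Write `F s = s / (1 - s)` for the law of OR's positive bid under `ν*` and
`G s = (v - 1/2) / (v - s)` for the law of AND's common bid under `μ*`. Neither law has atoms
at positive bids, so ties there are null and the tie-breaking rule only matters at a zero bid.
Against `ν*` a bid `(a₁, a₂)` earns AND at most
`½ (F a₁ (1 - a₁) - a₂) + ½ (F a₂ (1 - a₂) - a₁)`, and `F s (1 - s) ≤ s` with equality on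
`[0, 1/2]`. Against `μ*` a bid `(b₁, b₂) ≠ 0` earns OR `v G (max b₁ b₂) - b₁ G b₁ - b₂ G b₂`,
and `(v - s) G s ≤ v - 1/2` with equality on `[0, 1/2]`. So neither player gains by deviating,
each is indifferent on the support of its own strategy, and Fubini gives both utilities.
-/

lemma ae_ne_of_subsingleton {α β : Type*} [MeasurableSpace α] {μ : Measure α}
    [NullSingletonClass μ] {f : α → β} {t : Set α} {s : β} (ht : ∀ᵐ x ∂μ, x ∈ t)
    (h : (t ∩ f ⁻¹' {s}).Subsingleton) :
    ∀ᵐ x ∂μ, f x ≠ s := by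
  filter_upwards [ht, measure_eq_zero_iff_ae_notMem.1 (h.measure_zero μ)] with x hxt hx hfx
  exact hx ⟨hxt, hfx⟩

section Fubini

variable {α β : Type*} [MeasurableSpace α] [MeasurableSpace β]
  {μ : Measure α} {ν : Measure β} {f : α × β → ℝ} {c : ℝ}

lemma integral_prod_eq_of_ae_integral_eq [IsProbabilityMeasure μ] [SFinite ν]
    (hf : Integrable f (μ.prod ν)) (h : ∀ᵐ a ∂μ, ∫ b, f (a, b) ∂ν = c) :
    ∫ p, f p ∂μ.prod ν = c := by
  rw [integral_prod f hf, integral_congr_ae h, integral_const, probReal_univ, one_smul]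

lemma integral_prod_eq_of_ae_integral_eq_symm [SFinite μ] [IsProbabilityMeasure ν]
    (hf : Integrable f (μ.prod ν)) (h : ∀ᵐ b ∂ν, ∫ a, f (a, b) ∂μ = c) :
    ∫ p, f p ∂μ.prod ν = c := by
  rw [integral_prod_symm f hf, integral_congr_ae h, integral_const, probReal_univ, one_smul]

end Fubini

namespace TieRule

def swap (T : TieRule) : TieRule :=
  ⟨T.t2, T.t1, T.meas2, T.meas1, T.t2_nonneg, T.t2_le_one, T.t1_nonneg, T.t1_le_one⟩

end TieRule

section PureProfiles

variable (T : TieRule)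

lemma q1_nonneg (a b : Bid) : 0 ≤ q1 T a b := by
  unfold q1; split_ifs <;> simp [T.t1_nonneg]

lemma q1_le_one (a b : Bid) : q1 T a b ≤ 1 := by
  unfold q1; split_ifs <;> simp [T.t1_le_one]

lemma q2_nonneg (a b : Bid) : 0 ≤ q2 T a b := by
  unfold q2; split_ifs <;> simp [T.t2_nonneg]

lemma q2_le_one (a b : Bid) : q2 T a b ≤ 1 := by
  unfold q2; split_ifs <;> simp [T.t2_le_one]

lemma q1_swap (a b : Bid) : q1 T.swap a.swap b.swap = q2 T a b := rfl

lemma q2_swap (a b : Bid) : q2 T.swap a.swap b.swap = q1 T a b := rfl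

lemma uAnd_swap (a b : Bid) : uAnd T.swap a.swap b.swap = uAnd T a b := by
  simp only [uAnd, q1_swap, q2_swap, Prod.fst_swap, Prod.snd_swap]; ring

lemma measurable_q1 : Measurable (Function.uncurry (q1 T)) :=
  Measurable.ite (measurableSet_lt measurable_snd.fst measurable_fst.fst) measurable_const
    (Measurable.ite (measurableSet_eq_fun measurable_fst.fst measurable_snd.fst)
      (T.meas1.comp measurable_fst.fst) measurable_const)

lemma measurable_q2 : Measurable (Function.uncurry (q2 T)) :=
  Measurable.ite (measurableSet_lt measurable_snd.snd measurable_fst.snd) measurable_const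
    (Measurable.ite (measurableSet_eq_fun measurable_fst.snd measurable_snd.snd)
      (T.meas2.comp measurable_fst.snd) measurable_const)

lemma measurable_uAnd : Measurable (Function.uncurry (uAnd T)) := by
  have h1 := measurable_q1 T
  have h2 := measurable_q2 T
  unfold uAnd
  fun_prop

lemma measurable_uOr (v : ℝ) : Measurable (Function.uncurry (uOr v T)) := by
  have h1 := measurable_q1 T
  have h2 := measurable_q2 T
  unfold uOr
  fun_prop

lemma measurable_uAnd_right (a : Bid) : Measurable (uAnd T a) :=
  (measurable_uAnd T).comp measurable_prodMk_left

lemma measurable_uOr_left (v : ℝ) (b : Bid) : Measurable fun a => uOr v T a b := by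
  have h : Measurable fun a : Bid => Function.uncurry (uOr v T) (a, b) :=
    (measurable_uOr T v).comp (measurable_id.prodMk measurable_const)
  exact h

lemma abs_uAnd_le (a b : Bid) : |uAnd T a b| ≤ 1 + |a.1| + |a.2| := by
  have := q1_nonneg T a b; have := q1_le_one T a b
  have := q2_nonneg T a b; have := q2_le_one T a b
  rw [uAnd, abs_le]
  constructor <;> nlinarith [le_abs_self a.1, neg_abs_le a.1, le_abs_self a.2, neg_abs_le a.2]

lemma abs_uOr_le (v : ℝ) (a b : Bid) : |uOr v T a b| ≤ |v| + |b.1| + |b.2| := by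
  have := q1_nonneg T a b; have := q1_le_one T a b
  have := q2_nonneg T a b; have := q2_le_one T a b
  have := mul_nonneg (q1_nonneg T a b) (q2_nonneg T a b)
  have := mul_le_one₀ (q1_le_one T a b) (q2_nonneg T a b) (q2_le_one T a b)
  rw [uOr, abs_le]
  constructor <;> nlinarith [le_abs_self v, neg_abs_le v, le_abs_self b.1, neg_abs_le b.1,
    le_abs_self b.2, neg_abs_le b.2]

end PureProfiles

instance : IsProbabilityMeasure P01 :=
  ⟨by simp [P01]⟩

instance : NullSingletonClass P01 :=
  inferInstanceAs (NullSingletonClass (volume.restrict (Icc (0:ℝ) 1)))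

lemma ae_mem_Icc_P01 : ∀ᵐ u ∂P01, u ∈ Icc (0:ℝ) 1 :=
  ae_restrict_mem measurableSet_Icc

lemma P01_real_apply (S : Set ℝ) : P01.real S = volume.real (S ∩ Icc 0 1) := by
  simp [measureReal_def, P01, Measure.restrict_apply' measurableSet_Icc]

section OrBid

lemma div_one_add_lt_iff {u s : ℝ} (hu : 0 ≤ u) (hs : s < 1) :
    u / (1 + u) < s ↔ u < s / (1 - s) := by
  rw [div_lt_iff₀ (by linarith), lt_div_iff₀ (by linarith)]
  constructor <;> intro h <;> linarith

def orCDF (s : ℝ) : ℝ := P01.real {u | u / (1 + u) < s}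

lemma orCDF_eq {s : ℝ} (h0 : 0 ≤ s) (h1 : s ≤ 1/2) : orCDF s = s / (1 - s) := by
  have hw : s / (1 - s) ≤ 1 := by rw [div_le_one (by linarith)]; linarith
  have hset : {u : ℝ | u / (1 + u) < s} ∩ Icc 0 1 = Ico 0 (s / (1 - s)) := by
    ext u
    simp only [mem_inter_iff, mem_ofPred_eq, mem_Icc, mem_Ico]
    constructor
    · rintro ⟨h, hu0, -⟩
      exact ⟨hu0, (div_one_add_lt_iff hu0 (by linarith)).1 h⟩
    · rintro ⟨hu0, h⟩
      exact ⟨(div_one_add_lt_iff hu0 (by linarith)).2 h, hu0, h.le.trans hw⟩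
  rw [orCDF, P01_real_apply, hset, Real.volume_real_Ico_of_le (div_nonneg h0 (by linarith)),
    sub_zero]

lemma orCDF_mul_one_sub {s : ℝ} (h0 : 0 ≤ s) (h1 : s ≤ 1/2) : orCDF s * (1 - s) = s := by
  rw [orCDF_eq h0 h1, div_mul_cancel₀ _ (by linarith)]

lemma orCDF_mul_one_sub_le {s : ℝ} (hs : 0 ≤ s) : orCDF s * (1 - s) ≤ s := by
  rcases le_or_gt s (1/2) with h | h
  · exact (orCDF_mul_one_sub hs h).le
  · have : 0 ≤ orCDF s := measureReal_nonneg
    have : orCDF s ≤ 1 := measureReal_le_one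
    nlinarith

lemma ae_div_one_add_ne (s : ℝ) : ∀ᵐ u ∂P01, u / (1 + u) ≠ s := by
  refine ae_ne_of_subsingleton ae_mem_Icc_P01 ?_
  rintro u ⟨hu, rfl⟩ w ⟨hw, hwu⟩
  simp only [mem_preimage, mem_singleton_iff] at hwu
  rw [div_eq_div_iff (by linarith [hw.1]) (by linarith [hu.1])] at hwu
  linarith

end OrBid

section AndBid

variable {v : ℝ}

lemma gAnd_nonneg (v u : ℝ) : 0 ≤ gAnd v u := by
  unfold gAnd; split_ifs
  · exact le_max_left _ _
  · exact le_rfl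

lemma gAnd_le_half (hv : 1/2 < v) {u : ℝ} (hu : u ≤ 1) : gAnd v u ≤ 1/2 := by
  unfold gAnd; split_ifs with h
  · refine max_le (by norm_num) ?_
    have : v - 1/2 ≤ (v - 1/2) / u := by rw [le_div_iff₀ h]; nlinarith
    linarith
  · norm_num

lemma gAnd_le_iff (hv : 1/2 < v) {u s : ℝ} (hu : 0 ≤ u) (h0 : 0 ≤ s) (hsv : s < v) :
    gAnd v u ≤ s ↔ u ≤ (v - 1/2) / (v - s) := by
  have hvs : 0 < v - s := by linarith
  unfold gAnd
  split_ifs with hu'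
  · rw [max_le_iff, le_div_iff₀ hvs, sub_le_comm, le_div_iff₀ hu']
    constructor
    · rintro ⟨-, h⟩; linarith
    · intro h; exact ⟨h0, by linarith⟩
  · simp only [h0, true_iff]
    rw [le_antisymm (not_lt.1 hu') hu]
    exact div_nonneg (by linarith) hvs.le

def andCDF (v s : ℝ) : ℝ := P01.real {u | gAnd v u ≤ s}

lemma andCDF_eq (hv : 1/2 < v) {s : ℝ} (h0 : 0 ≤ s) (h1 : s ≤ 1/2) :
    andCDF v s = (v - 1/2) / (v - s) := by
  have hw : (v - 1/2) / (v - s) ≤ 1 := by rw [div_le_one (by linarith)]; linarith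
  have hset : {u : ℝ | gAnd v u ≤ s} ∩ Icc 0 1 = Icc 0 ((v - 1/2) / (v - s)) := by
    ext u
    simp only [mem_inter_iff, mem_ofPred_eq, mem_Icc]
    constructor
    · rintro ⟨h, hu0, -⟩
      exact ⟨hu0, (gAnd_le_iff hv hu0 h0 (by linarith)).1 h⟩
    · rintro ⟨hu0, h⟩
      exact ⟨(gAnd_le_iff hv hu0 h0 (by linarith)).2 h, hu0, h.trans hw⟩
  rw [andCDF, P01_real_apply, hset,
    Real.volume_real_Icc_of_le (div_nonneg (by linarith) (by linarith)), sub_zero]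

lemma sub_mul_andCDF (hv : 1/2 < v) {s : ℝ} (h0 : 0 ≤ s) (h1 : s ≤ 1/2) :
    (v - s) * andCDF v s = v - 1/2 := by
  rw [andCDF_eq hv h0 h1, mul_div_cancel₀ _ (by linarith)]

lemma sub_mul_andCDF_le (hv : 1/2 < v) {s : ℝ} (hs : 0 ≤ s) :
    (v - s) * andCDF v s ≤ v - 1/2 := by
  rcases le_or_gt s (1/2) with h | h
  · exact (sub_mul_andCDF hv hs h).le
  · have : 0 ≤ andCDF v s := measureReal_nonneg
    have : andCDF v s ≤ 1 := measureReal_le_one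
    nlinarith

lemma ae_gAnd_ne (hv : 1/2 < v) (s : ℝ) : ∀ᵐ u ∂P01, 0 < s → gAnd v u ≠ s := by
  rcases le_or_gt s 0 with hs | hs
  · exact ae_of_all _ fun _ h => absurd h hs.not_gt
  refine (ae_ne_of_subsingleton (t := univ) (ae_of_all _ mem_univ) ?_).mono fun _ h _ => h
  suffices ∀ u, gAnd v u = s → u = (v - 1/2) / (v - s) by
    rintro u ⟨-, hu⟩ w ⟨-, hw⟩
    rw [this u hu, this w hw]
  intro u hu
  unfold gAnd at hu
  split_ifs at hu with hu0
  · have hpos : 0 < v - (v - 1/2) / u := by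
      by_contra hle
      rw [max_eq_left (not_lt.1 hle)] at hu
      linarith
    rw [max_eq_right hpos.le] at hu
    have : 0 < (v - 1/2) / u := div_pos (by linarith) hu0
    rw [eq_div_iff (by linarith), ← hu]
    field_simp
    ring
  · linarith

end AndBid

section MixedStrategies

variable {v : ℝ}

lemma measurableSet_box (v : ℝ) : MeasurableSet (box v) :=
  measurableSet_Icc.prod measurableSet_Icc

lemma isMixed_iff_ae_mem {μ : Measure Bid} [IsProbabilityMeasure μ] :
    IsMixed v μ ↔ ∀ᵐ a ∂μ, a ∈ box v := by
  rw [ae_mem_iff_measure_eq (measurableSet_box v).nullMeasurableSet, measure_univ]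
  exact ⟨And.right, And.intro ‹_›⟩

lemma ae_mem_box_prod {μ ν : Measure Bid} (hμ : IsMixed v μ) (hν : IsMixed v ν) :
    ∀ᵐ p ∂μ.prod ν, p.1 ∈ box v ∧ p.2 ∈ box v := by
  have := hμ.1; have := hν.1
  filter_upwards [Measure.quasiMeasurePreserving_fst.ae (isMixed_iff_ae_mem.1 hμ),
    Measure.quasiMeasurePreserving_snd.ae (isMixed_iff_ae_mem.1 hν)] with p hp1 hp2
  exact ⟨hp1, hp2⟩

lemma abs_le_Hval {x : ℝ} (hx : x ∈ Icc 0 (Hval v)) : |x| ≤ Hval v := by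
  rw [abs_of_nonneg hx.1]; exact hx.2

lemma integrable_uAnd (T : TieRule) {μ ν : Measure Bid} (hμ : IsMixed v μ)
    (hν : IsMixed v ν) :
    Integrable (Function.uncurry (uAnd T)) (μ.prod ν) := by
  have := hμ.1; have := hν.1
  refine .of_bound (measurable_uAnd T).aestronglyMeasurable (1 + Hval v + Hval v) ?_
  filter_upwards [ae_mem_box_prod hμ hν] with p ⟨⟨ha1, ha2⟩, _⟩
  have := abs_uAnd_le T p.1 p.2
  have := abs_le_Hval ha1; have := abs_le_Hval ha2
  rw [Real.norm_eq_abs]; unfold Function.uncurry; linarith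

lemma integrable_uOr (T : TieRule) {μ ν : Measure Bid} (hμ : IsMixed v μ)
    (hν : IsMixed v ν) :
    Integrable (Function.uncurry (uOr v T)) (μ.prod ν) := by
  have := hμ.1; have := hν.1
  refine .of_bound (measurable_uOr T v).aestronglyMeasurable (|v| + Hval v + Hval v) ?_
  filter_upwards [ae_mem_box_prod hμ hν] with p ⟨_, ⟨hb1, hb2⟩⟩
  have := abs_uOr_le T v p.1 p.2
  have := abs_le_Hval hb1; have := abs_le_Hval hb2
  rw [Real.norm_eq_abs]; unfold Function.uncurry; linarith

end MixedStrategies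

section EquilibriumStrategies

variable {v : ℝ}

lemma measurable_gAnd (v : ℝ) : Measurable (gAnd v) :=
  Measurable.ite (measurableSet_lt measurable_const measurable_id)
    (measurable_const.max (measurable_const.sub (measurable_const.div measurable_id)))
    measurable_const

lemma measurable_diag_gAnd (v : ℝ) : Measurable fun u => (gAnd v u, gAnd v u) :=
  (measurable_gAnd v).prodMk (measurable_gAnd v)

lemma measurable_div_one_add : Measurable fun u : ℝ => u / (1 + u) :=
  measurable_id.div (measurable_const.add measurable_id)

instance (v : ℝ) : IsProbabilityMeasure (muStar v) :=
  Measure.isProbabilityMeasure_map (measurable_diag_gAnd v).aemeasurable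

instance : IsProbabilityMeasure nuStar := by
  have := Measure.isProbabilityMeasure_map (μ := P01) (f := fun u => (u / (1 + u), (0:ℝ)))
    (by fun_prop)
  have := Measure.isProbabilityMeasure_map (μ := P01) (f := fun u => ((0:ℝ), u / (1 + u)))
    (by fun_prop)
  constructor
  simp [nuStar, ENNReal.inv_two_add_inv_two]

lemma ae_muStar (hv : 1/2 < v) : ∀ᵐ a ∂muStar v, a.1 ∈ Icc 0 (1/2) ∧ a.2 = a.1 := by
  have hS : MeasurableSet {a : Bid | a.1 ∈ Icc 0 (1/2) ∧ a.2 = a.1} :=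
    (measurable_fst measurableSet_Icc).inter (measurableSet_eq_fun measurable_snd measurable_fst)
  refine (ae_map_iff (measurable_diag_gAnd v).aemeasurable hS).2 ?_
  filter_upwards [ae_mem_Icc_P01] with u hu
  exact ⟨⟨gAnd_nonneg v u, gAnd_le_half hv hu.2⟩, rfl⟩

lemma ae_div_one_add_mem : ∀ᵐ u ∂P01, u / (1 + u) ∈ Ioc 0 (1/2) := by
  filter_upwards [ae_mem_Icc_P01, ae_div_one_add_ne 0] with u hu hu0
  have h1 : 0 < 1 + u := by linarith [hu.1]
  refine ⟨lt_of_le_of_ne (div_nonneg hu.1 h1.le) (Ne.symm hu0), ?_⟩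
  rw [div_le_iff₀ h1]; linarith [hu.2]

def nuStarCarrier : Set Bid := Ioc 0 (1/2) ×ˢ {0} ∪ {0} ×ˢ Ioc 0 (1/2)

lemma ae_nuStar : ∀ᵐ b ∂nuStar, b ∈ nuStarCarrier := by
  have hS : MeasurableSet nuStarCarrier :=
    (measurableSet_Ioc.prod (measurableSet_singleton 0)).union
      ((measurableSet_singleton 0).prod measurableSet_Ioc)
  rw [nuStar, ae_add_measure_iff]
  refine ⟨Measure.ae_smul_measure ?_ _, Measure.ae_smul_measure ?_ _⟩ <;>
    refine (ae_map_iff (by fun_prop) hS).2 ?_ <;> filter_upwards [ae_div_one_add_mem] with u hu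
  exacts [Or.inl ⟨hu, rfl⟩, Or.inr ⟨rfl, hu⟩]

lemma half_le_Hval (v : ℝ) : 1/2 ≤ Hval v := by
  unfold Hval; linarith [le_max_left 1 v]

lemma isMixed_muStar (hv : 1/2 < v) : IsMixed v (muStar v) := by
  refine isMixed_iff_ae_mem.2 ?_
  filter_upwards [ae_muStar hv] with a ⟨ha, ha'⟩
  have ha : a.1 ∈ Icc 0 (Hval v) := ⟨ha.1, ha.2.trans (half_le_Hval v)⟩
  exact ⟨ha, ha' ▸ ha⟩

lemma isMixed_nuStar (v : ℝ) : IsMixed v nuStar := by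
  refine isMixed_iff_ae_mem.2 ?_
  have hI : Ioc (0:ℝ) (1/2) ⊆ Icc 0 (Hval v) := fun x hx =>
    ⟨hx.1.le, hx.2.trans (half_le_Hval v)⟩
  have h0 : (0:ℝ) ∈ Icc 0 (Hval v) := ⟨le_rfl, by linarith [half_le_Hval v]⟩
  filter_upwards [ae_nuStar] with b hb
  rcases hb with ⟨hb1, hb2⟩ | ⟨hb1, hb2⟩
  · exact ⟨hI hb1, (mem_singleton_iff.1 hb2) ▸ h0⟩
  · exact ⟨(mem_singleton_iff.1 hb1) ▸ h0, hI hb2⟩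

lemma integral_nuStar {f : Bid → ℝ} (hf : Measurable f) {C : ℝ} (hC : ∀ b, |f b| ≤ C) :
    ∫ b, f b ∂nuStar =
      (1/2) * ∫ u, f (u / (1 + u), 0) ∂P01 + (1/2) * ∫ u, f (0, u / (1 + u)) ∂P01 := by
  have hint : ∀ g : ℝ → Bid, Integrable f ((1/2 : ℝ≥0∞) • P01.map g) := fun g =>
    (Integrable.of_bound hf.aestronglyMeasurable C (ae_of_all _ hC)).smul_measure (by simp)
  rw [nuStar, integral_add_measure (hint _) (hint _), integral_smul_measure, integral_smul_measure,
    integral_map (by fun_prop) hf.aestronglyMeasurable,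
    integral_map (by fun_prop) hf.aestronglyMeasurable]
  simp

end EquilibriumStrategies

section AndBestResponse

variable (T : TieRule)

lemma mul_q2_zero {a : Bid} (ha : 0 ≤ a.2) : a.2 * q2 T a 0 = a.2 := by
  rcases ha.eq_or_lt with h | h
  · rw [← h, zero_mul]
  · simp [q2, h]

lemma uAnd_fst_eq {a : Bid} (ha : 0 ≤ a.2) {x : ℝ} (hx : a.1 ≠ x) :
    uAnd T a (x, 0) = (if x < a.1 then q2 T a 0 - a.1 else 0) - a.2 := by
  have hq2 : q2 T a (x, 0) = q2 T a 0 := rfl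
  rw [uAnd, hq2, mul_q2_zero T ha, q1]
  split_ifs <;> ring

lemma integral_uAnd_fst {a : Bid} (ha : 0 ≤ a.2) :
    ∫ u, uAnd T a (u / (1 + u), 0) ∂P01 = orCDF a.1 * (q2 T a 0 - a.1) - a.2 := by
  have hS : MeasurableSet {u : ℝ | u / (1 + u) < a.1} :=
    measurableSet_lt measurable_div_one_add measurable_const
  have hae : (fun u => uAnd T a (u / (1 + u), 0)) =ᵐ[P01]
      fun u => {u | u / (1 + u) < a.1}.indicator (fun _ => q2 T a 0 - a.1) u - a.2 := by
    filter_upwards [ae_div_one_add_ne a.1] with u hu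
    rw [uAnd_fst_eq T ha hu.symm, indicator]
    rfl
  rw [integral_congr_ae hae, integral_sub ((integrable_const _).indicator hS) (integrable_const _),
    integral_indicator_const _ hS, integral_const]
  simp [orCDF, mul_comm]

lemma integral_uAnd_snd {a : Bid} (ha : 0 ≤ a.1) :
    ∫ u, uAnd T a (0, u / (1 + u)) ∂P01 = orCDF a.2 * (q1 T a 0 - a.2) - a.1 := by
  simp_rw [← uAnd_swap T a]
  exact integral_uAnd_fst T.swap (a := a.swap) ha

lemma integral_uAnd_nuStar {a : Bid} (ha1 : 0 ≤ a.1) (ha2 : 0 ≤ a.2) :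
    ∫ b, uAnd T a b ∂nuStar =
      (1/2) * (orCDF a.1 * (q2 T a 0 - a.1) - a.2) +
        (1/2) * (orCDF a.2 * (q1 T a 0 - a.2) - a.1) := by
  rw [integral_nuStar (measurable_uAnd_right T a) (abs_uAnd_le T a),
    integral_uAnd_fst T ha2, integral_uAnd_snd T ha1]

lemma integral_uAnd_nuStar_nonpos {a : Bid} (ha1 : 0 ≤ a.1) (ha2 : 0 ≤ a.2) :
    ∫ b, uAnd T a b ∂nuStar ≤ 0 := by
  have h1 : orCDF a.1 * (q2 T a 0 - a.1) ≤ orCDF a.1 * (1 - a.1) :=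
    mul_le_mul_of_nonneg_left (by linarith [q2_le_one T a 0]) measureReal_nonneg
  have h2 : orCDF a.2 * (q1 T a 0 - a.2) ≤ orCDF a.2 * (1 - a.2) :=
    mul_le_mul_of_nonneg_left (by linarith [q1_le_one T a 0]) measureReal_nonneg
  rw [integral_uAnd_nuStar T ha1 ha2]
  linarith [orCDF_mul_one_sub_le ha1, orCDF_mul_one_sub_le ha2]

lemma integral_uAnd_nuStar_diag {y : ℝ} (h0 : 0 ≤ y) (h1 : y ≤ 1/2) :
    ∫ b, uAnd T (y, y) b ∂nuStar = 0 := by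
  rw [integral_uAnd_nuStar T h0 h0]
  rcases h0.eq_or_lt with rfl | hy
  · simp [orCDF_eq le_rfl (by norm_num : (0:ℝ) ≤ 1/2)]
  · have hq1 : q1 T (y, y) 0 = 1 := if_pos hy
    have hq2 : q2 T (y, y) 0 = 1 := if_pos hy
    simp only [hq1, hq2, orCDF_mul_one_sub h0 h1]
    ring

end AndBestResponse

section OrBestResponse

variable (T : TieRule) {v : ℝ}

-- On a tie at a zero bid OR pays nothing and AND, bidding 0, loses the other item.
lemma uOr_diag_eq {y : ℝ} {b : Bid} (hb1 : 0 ≤ b.1) (hb2 : 0 ≤ b.2) (hb : 0 < max b.1 b.2)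
    (hy1 : 0 < b.1 → y ≠ b.1) (hy2 : 0 < b.2 → y ≠ b.2) :
    uOr v T (y, y) b = (if y ≤ max b.1 b.2 then v else 0) - (if y ≤ b.1 then b.1 else 0)
      - (if y ≤ b.2 then b.2 else 0) := by
  obtain ⟨b1, b2⟩ := b
  simp only at *
  rcases hb1.eq_or_lt with rfl | hb1 <;> rcases hb2.eq_or_lt with rfl | hb2 <;>
    simp_all [uOr, q1, q2] <;> split_ifs <;> grind

lemma uOr_diag_zero_le (hv : 0 ≤ v) {y : ℝ} (hy : 0 ≤ y) :
    uOr v T (y, y) 0 ≤ if y ≤ 0 then v else 0 := by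
  rcases hy.eq_or_lt with rfl | hy
  · have := mul_nonneg (T.t1_nonneg 0) (T.t2_nonneg 0)
    simp [uOr, q1, q2]
    nlinarith
  · simp [uOr, q1, q2, hy, not_le.2 hy]

lemma integral_muStar {f : Bid → ℝ} (hf : Measurable f) :
    ∫ a, f a ∂muStar v = ∫ u, f (gAnd v u, gAnd v u) ∂P01 :=
  integral_map (measurable_diag_gAnd v).aemeasurable hf.aestronglyMeasurable

lemma integral_uOr_muStar (hv : 1/2 < v) {b : Bid} (hb1 : 0 ≤ b.1) (hb2 : 0 ≤ b.2)
    (hb : 0 < max b.1 b.2) :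
    ∫ a, uOr v T a b ∂muStar v =
      v * andCDF v (max b.1 b.2) - b.1 * andCDF v b.1 - b.2 * andCDF v b.2 := by
  have hS : ∀ s, MeasurableSet {u | gAnd v u ≤ s} := fun s =>
    measurableSet_le (measurable_gAnd v) measurable_const
  have hae : (fun u => uOr v T (gAnd v u, gAnd v u) b) =ᵐ[P01] fun u =>
      {u | gAnd v u ≤ max b.1 b.2}.indicator (fun _ => v) u
        - {u | gAnd v u ≤ b.1}.indicator (fun _ => b.1) u
        - {u | gAnd v u ≤ b.2}.indicator (fun _ => b.2) u := by
    filter_upwards [ae_gAnd_ne hv b.1, ae_gAnd_ne hv b.2] with u hu1 hu2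
    exact uOr_diag_eq T hb1 hb2 hb hu1 hu2
  have hint : ∀ s c : ℝ, Integrable ({u | gAnd v u ≤ s}.indicator fun _ => c) P01 :=
    fun s c => (integrable_const c).indicator (hS s)
  rw [integral_muStar (measurable_uOr_left T v b), integral_congr_ae hae,
    integral_sub ?_ (hint _ _), integral_sub (hint _ _) (hint _ _),
    integral_indicator_const _ (hS _), integral_indicator_const _ (hS _),
    integral_indicator_const _ (hS _)]
  · simp [andCDF, mul_comm]
  · exact (hint _ _).sub (hint _ _)

lemma integral_uOr_muStar_zero_le (hv : 1/2 < v) : ∫ a, uOr v T a 0 ∂muStar v ≤ v - 1/2 := by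
  have hS : MeasurableSet {u | gAnd v u ≤ 0} :=
    measurableSet_le (measurable_gAnd v) measurable_const
  have hm := measurable_uOr_left T v 0
  rw [integral_muStar hm]
  calc ∫ u, uOr v T (gAnd v u, gAnd v u) 0 ∂P01
      ≤ ∫ u, {u | gAnd v u ≤ 0}.indicator (fun _ => v) u ∂P01 := by
        have hbound : ∀ u, ‖uOr v T (gAnd v u, gAnd v u) 0‖ ≤ |v| := fun u => by
          simpa using abs_uOr_le T v (gAnd v u, gAnd v u) 0
        refine integral_mono (.of_bound (hm.comp (measurable_diag_gAnd v)).aestronglyMeasurable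
          |v| (ae_of_all _ hbound)) ((integrable_const v).indicator hS) fun u => ?_
        exact uOr_diag_zero_le T (by linarith) (gAnd_nonneg v u)
    _ = v * andCDF v 0 := by rw [integral_indicator_const _ hS, smul_eq_mul, mul_comm]; rfl
    _ = v - 1/2 := by linarith [sub_mul_andCDF hv le_rfl (by norm_num : (0:ℝ) ≤ 1/2)]

lemma integral_uOr_muStar_le (hv : 1/2 < v) {b : Bid} (hb1 : 0 ≤ b.1) (hb2 : 0 ≤ b.2) :
    ∫ a, uOr v T a b ∂muStar v ≤ v - 1/2 := by
  rcases (le_max_of_le_left hb1 : 0 ≤ max b.1 b.2).eq_or_lt with hb | hb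
  · have : b = 0 := Prod.ext (le_antisymm ((le_max_left _ _).trans hb.ge) hb1)
      (le_antisymm ((le_max_right _ _).trans hb.ge) hb2)
    exact this ▸ integral_uOr_muStar_zero_le T hv
  rw [integral_uOr_muStar T hv hb1 hb2 hb]
  have h1 : 0 ≤ b.1 * andCDF v b.1 := mul_nonneg hb1 measureReal_nonneg
  have h2 : 0 ≤ b.2 * andCDF v b.2 := mul_nonneg hb2 measureReal_nonneg
  rcases max_choice b.1 b.2 with hM | hM <;> rw [hM]
  · linarith [sub_mul_andCDF_le hv hb1]
  · linarith [sub_mul_andCDF_le hv hb2]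

lemma integral_uOr_muStar_of_mem (hv : 1/2 < v) {b : Bid} (hb : b ∈ nuStarCarrier) :
    ∫ a, uOr v T a b ∂muStar v = v - 1/2 := by
  rcases hb with ⟨⟨h0, h1⟩, h2⟩ | ⟨h2, ⟨h0, h1⟩⟩ <;> rw [mem_singleton_iff] at h2
  · rw [integral_uOr_muStar T hv h0.le (by rw [h2]) (by simp [h2, h0]), h2, max_eq_left h0.le]
    linarith [sub_mul_andCDF hv h0.le h1]
  · rw [integral_uOr_muStar T hv (by rw [h2]) h0.le (by simp [h2, h0]), h2, max_eq_right h0.le]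
    linarith [sub_mul_andCDF hv h0.le h1]

end OrBestResponse

/-- For every `v > 1/2` and every tie-breaking rule, `(μ*, ν*)` is a mixed
Nash equilibrium, with `U_and(μ*,ν*) = 0` and `U_or(μ*,ν*) = v - 1/2`. -/
theorem star_is_nash (v : ℝ) (hv : 1/2 < v) (T : TieRule) :
    IsNash v T (muStar v) nuStar ∧
    UAnd T (muStar v) nuStar = 0 ∧
    UOr v T (muStar v) nuStar = v - 1/2 := by
  have hμ := isMixed_muStar hv
  have hν := isMixed_nuStar v
  have hAnd : UAnd T (muStar v) nuStar = 0 := by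
    refine integral_prod_eq_of_ae_integral_eq (integrable_uAnd T hμ hν) ?_
    filter_upwards [ae_muStar hv] with a ⟨ha, ha'⟩
    rw [show a = (a.1, a.1) from Prod.ext rfl ha']
    exact integral_uAnd_nuStar_diag T ha.1 ha.2
  have hOr : UOr v T (muStar v) nuStar = v - 1/2 :=
    integral_prod_eq_of_ae_integral_eq_symm (integrable_uOr T hμ hν)
      (ae_nuStar.mono fun b hb => integral_uOr_muStar_of_mem T hv hb)
  refine ⟨⟨hμ, hν, fun a ha => ?_, fun b hb => ?_⟩, hAnd, hOr⟩
  · rw [hAnd]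
    exact integral_uAnd_nuStar_nonpos T ha.1.1 ha.2.1
  · rw [hOr]
    exact integral_uOr_muStar_le T hv hb.1.1 hb.2.1
end
end

section
/- Fix a real v > 1/2 and a tie-breaking rule. Let μ and μ' be mixed strategies for AND with identical marginal distributions (Measure.map Prod.fst μ = Measure.map Prod.fst μ' and Measure.map Prod.snd μ = Measure.map Prod.snd μ'). Then for every mixed strategy ν for OR, the following are equivalent: (1) U_and(μ,ν) ≤ U_and(μ',ν); (2) U_or(μ,ν) ≥ U_or(μ',ν); (3) ∫ q₁·q₂ d(μ.prod ν) ≤ ∫ q₁·q₂ d(μ'.prod ν) (AND wins both items with smaller probability under μ); (4) ∫ (1 − q₁·q₂) d(μ.prod ν) ≥ ∫ (1 − q₁·q₂) d(μ'.prod ν); (5) ∫ (1−q₁)·(1−q₂) d(μ.prod ν) ≤ ∫ (1−q₁)·(1−q₂) d(μ'.prod ν) (AND wins no item with smaller probability under μ). -/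
open MeasureTheory Set
open scoped ENNReal

noncomputable section

/-!
Under `μ` and `μ'` every quantity that depends on AND's bid through a single coordinate, such as
AND's payment `aᵢ qᵢ`, OR's payment `bᵢ (1 - qᵢ)` or the win probability `qᵢ` of one item, has the
same expectation against `ν`, since the law of `(aᵢ, b)` under `μ × ν` is `μᵢ × ν`. Expanding the
utilities therefore shows that all five quantities change between `μ` and `μ'` only through the
probability `A = ∫ q₁ q₂` that AND wins both items: `U_and`, `∫ (1 - q₁)(1 - q₂)` move like `A`,
while `U_or` (slope `-v < 0`) and `∫ (1 - q₁ q₂)` move against it.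
-/

theorem integral_prod_comp_eq_of_map_eq {α β γ E : Type*} [MeasurableSpace α]
    [MeasurableSpace β] [MeasurableSpace γ] [NormedAddCommGroup E] [NormedSpace ℝ E]
    {μ μ' : Measure α} [SFinite μ] [SFinite μ'] {ν : Measure β} [SFinite ν]
    {f : α → γ} (hf : Measurable f) (h : μ.map f = μ'.map f)
    {g : γ × β → E} (hg : StronglyMeasurable g) :
    ∫ p, g (f p.1, p.2) ∂(μ.prod ν) = ∫ p, g (f p.1, p.2) ∂(μ'.prod ν) := by
  have h_map (κ : Measure α) [SFinite κ] :
      ∫ p, g (f p.1, p.2) ∂(κ.prod ν) = ∫ q, g q ∂((κ.map f).prod ν) := by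
    conv_rhs => rw [← ν.map_id, Measure.map_prod_map κ ν hf measurable_id,
      integral_map (hf.prodMap measurable_id).aemeasurable hg.aestronglyMeasurable]
    rfl
  rw [h_map μ, h_map μ', h]

section WinProb

variable {α : Type*} [MeasurableSpace α] {t : ℝ → ℝ}

-- `q1 T a b` and `q2 T a b` unfold to `winProb T.t1 a.1 b.1` and `winProb T.t2 a.2 b.2`.
def winProb (t : ℝ → ℝ) (x y : ℝ) : ℝ :=
  if y < x then 1 else if x = y then t x else 0

lemma winProb_mem_Icc (ht : ∀ x, t x ∈ Icc 0 1) (x y : ℝ) : winProb t x y ∈ Icc (0 : ℝ) 1 := by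
  unfold winProb
  split_ifs
  exacts [⟨zero_le_one, le_rfl⟩, ht x, ⟨le_rfl, zero_le_one⟩]

lemma abs_winProb_le_one (ht : ∀ x, t x ∈ Icc 0 1) (x y : ℝ) : |winProb t x y| ≤ 1 := by
  obtain ⟨h0, h1⟩ := winProb_mem_Icc ht x y
  exact abs_le.2 ⟨by linarith, h1⟩

lemma abs_one_sub_winProb_le_one (ht : ∀ x, t x ∈ Icc 0 1) (x y : ℝ) :
    |1 - winProb t x y| ≤ 1 := by
  obtain ⟨h0, h1⟩ := winProb_mem_Icc ht x y
  exact abs_le.2 ⟨by linarith, by linarith⟩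

@[fun_prop]
lemma measurable_winProb (ht : Measurable t) {f g : α → ℝ} (hf : Measurable f)
    (hg : Measurable g) : Measurable fun a => winProb t (f a) (g a) :=
  Measurable.ite (measurableSet_lt hg hf) measurable_const
    (Measurable.ite (measurableSet_eq_fun hf hg) (ht.comp hf) measurable_const)

end WinProb

lemma TieRule.t1_mem_Icc (T : TieRule) (x : ℝ) : T.t1 x ∈ Icc (0 : ℝ) 1 :=
  ⟨T.t1_nonneg x, T.t1_le_one x⟩

lemma TieRule.t2_mem_Icc (T : TieRule) (x : ℝ) : T.t2 x ∈ Icc (0 : ℝ) 1 :=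
  ⟨T.t2_nonneg x, T.t2_le_one x⟩

attribute [fun_prop] TieRule.meas1 TieRule.meas2

section Payoffs

variable {α : Type*} [MeasurableSpace α] {T : TieRule}

@[fun_prop]
lemma measurable_q1_s12 {f g : α → Bid} (hf : Measurable f) (hg : Measurable g) :
    Measurable fun x => q1 T (f x) (g x) :=
  measurable_winProb T.meas1 hf.fst hg.fst

@[fun_prop]
lemma measurable_q2_s12 {f g : α → Bid} (hf : Measurable f) (hg : Measurable g) :
    Measurable fun x => q2 T (f x) (g x) :=
  measurable_winProb T.meas2 hf.snd hg.snd

lemma norm_q1_le_one (a b : Bid) : ‖q1 T a b‖ ≤ 1 := abs_winProb_le_one T.t1_mem_Icc _ _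

lemma norm_q2_le_one (a b : Bid) : ‖q2 T a b‖ ≤ 1 := abs_winProb_le_one T.t2_mem_Icc _ _

lemma norm_one_sub_q1_le_one (a b : Bid) : ‖1 - q1 T a b‖ ≤ 1 :=
  abs_one_sub_winProb_le_one T.t1_mem_Icc _ _

lemma norm_one_sub_q2_le_one (a b : Bid) : ‖1 - q2 T a b‖ ≤ 1 :=
  abs_one_sub_winProb_le_one T.t2_mem_Icc _ _

variable {ρ : Measure (Bid × Bid)} [IsFiniteMeasure ρ]

lemma integrable_q1 : Integrable (fun p => q1 T p.1 p.2) ρ :=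
  .of_bound (by fun_prop) 1 (ae_of_all _ fun _ => norm_q1_le_one _ _)

lemma integrable_q2 : Integrable (fun p => q2 T p.1 p.2) ρ :=
  .of_bound (by fun_prop) 1 (ae_of_all _ fun _ => norm_q2_le_one _ _)

lemma integrable_q1_mul_q2 : Integrable (fun p => q1 T p.1 p.2 * q2 T p.1 p.2) ρ :=
  integrable_q2.bdd_mul (by fun_prop) (ae_of_all _ fun _ => norm_q1_le_one _ _)

lemma integral_one_sub_q1_mul_q2 [IsProbabilityMeasure ρ] :
    ∫ p, (1 - q1 T p.1 p.2 * q2 T p.1 p.2) ∂ρ = 1 - ∫ p, q1 T p.1 p.2 * q2 T p.1 p.2 ∂ρ := by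
  simp [integral_sub (integrable_const 1) integrable_q1_mul_q2]

lemma integral_one_sub_q1_mul_one_sub_q2 [IsProbabilityMeasure ρ] :
    ∫ p, (1 - q1 T p.1 p.2) * (1 - q2 T p.1 p.2) ∂ρ =
      1 - ∫ p, q1 T p.1 p.2 ∂ρ - ∫ p, q2 T p.1 p.2 ∂ρ + ∫ p, q1 T p.1 p.2 * q2 T p.1 p.2 ∂ρ := by
  have h_expand : (fun p : Bid × Bid => (1 - q1 T p.1 p.2) * (1 - q2 T p.1 p.2)) =
      fun p => 1 - q1 T p.1 p.2 - q2 T p.1 p.2 + q1 T p.1 p.2 * q2 T p.1 p.2 := by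
    ext; ring
  rw [h_expand, integral_add, integral_sub, integral_sub, integral_const, probReal_univ, one_smul]
  exacts [integrable_const 1, integrable_q1, (integrable_const 1).sub integrable_q1, integrable_q2,
    ((integrable_const 1).sub integrable_q1).sub integrable_q2, integrable_q1_mul_q2]

end Payoffs

section Expectations

variable {T : TieRule} {κ ν : Measure Bid}

lemma integral_uAnd [IsFiniteMeasure κ] [IsFiniteMeasure ν] (hκ : Integrable id κ) :
    ∫ p, uAnd T p.1 p.2 ∂(κ.prod ν) = ∫ p, q1 T p.1 p.2 * q2 T p.1 p.2 ∂(κ.prod ν) -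
      ∫ p, p.1.1 * q1 T p.1 p.2 ∂(κ.prod ν) - ∫ p, p.1.2 * q2 T p.1 p.2 ∂(κ.prod ν) := by
  have h_bid₁ := (hκ.fst.comp_fst ν).mul_bdd (by fun_prop)
    (ae_of_all _ fun p => norm_q1_le_one (T := T) p.1 p.2)
  have h_bid₂ := (hκ.snd.comp_fst ν).mul_bdd (by fun_prop)
    (ae_of_all _ fun p => norm_q2_le_one (T := T) p.1 p.2)
  simp only [uAnd]
  rw [integral_sub, integral_sub]
  exacts [integrable_q1_mul_q2, h_bid₁, integrable_q1_mul_q2.sub h_bid₁, h_bid₂]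

lemma integral_uOr [IsProbabilityMeasure κ] [IsProbabilityMeasure ν] (hν : Integrable id ν)
    (v : ℝ) :
    ∫ p, uOr v T p.1 p.2 ∂(κ.prod ν) = v * (1 - ∫ p, q1 T p.1 p.2 * q2 T p.1 p.2 ∂(κ.prod ν)) -
      ∫ p, p.2.1 * (1 - q1 T p.1 p.2) ∂(κ.prod ν) -
      ∫ p, p.2.2 * (1 - q2 T p.1 p.2) ∂(κ.prod ν) := by
  have h_bid₁ := (hν.fst.comp_snd κ).mul_bdd (by fun_prop)
    (ae_of_all _ fun p => norm_one_sub_q1_le_one (T := T) p.1 p.2)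
  have h_bid₂ := (hν.snd.comp_snd κ).mul_bdd (by fun_prop)
    (ae_of_all _ fun p => norm_one_sub_q2_le_one (T := T) p.1 p.2)
  have h_value :=
    ((integrable_const 1).sub (integrable_q1_mul_q2 (T := T) (ρ := κ.prod ν))).const_mul v
  simp only [uOr]
  rw [integral_sub, integral_sub, integral_const_mul, integral_one_sub_q1_mul_q2]
  exacts [h_value, h_bid₁, h_value.sub h_bid₁, h_bid₂]

end Expectations

lemma IsMixed.ae_mem_box {v : ℝ} {μ : Measure Bid} (h : IsMixed v μ) : ∀ᵐ a ∂μ, a ∈ box v := by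
  have := h.1
  have h_meas : MeasurableSet (box v) := measurableSet_Icc.prod measurableSet_Icc
  rw [ae_mem_iff_measure_eq h_meas.nullMeasurableSet, h.2, measure_univ]

lemma IsMixed.integrable_id {v : ℝ} {μ : Measure Bid} (h : IsMixed v μ) : Integrable id μ := by
  have := h.1
  have h_norm (x : ℝ) (hx : x ∈ Icc 0 (Hval v)) : ‖x‖ ≤ Hval v :=
    (Real.norm_of_nonneg hx.1).trans_le hx.2
  exact .of_bound aestronglyMeasurable_id (Hval v)
    (h.ae_mem_box.mono fun a ha => norm_prod_le_iff.2 ⟨h_norm _ ha.1, h_norm _ ha.2⟩)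

section Marginals

variable {T : TieRule} {μ μ' ν : Measure Bid}

lemma UAnd_sub_UAnd [IsFiniteMeasure μ] [IsFiniteMeasure μ'] [IsFiniteMeasure ν]
    (hμ : Integrable id μ) (hμ' : Integrable id μ')
    (h₁ : μ.map Prod.fst = μ'.map Prod.fst) (h₂ : μ.map Prod.snd = μ'.map Prod.snd) :
    UAnd T μ ν - UAnd T μ' ν = ∫ p, q1 T p.1 p.2 * q2 T p.1 p.2 ∂(μ.prod ν) -
      ∫ p, q1 T p.1 p.2 * q2 T p.1 p.2 ∂(μ'.prod ν) := by
  have e₁ : ∫ p, p.1.1 * q1 T p.1 p.2 ∂(μ.prod ν) = ∫ p, p.1.1 * q1 T p.1 p.2 ∂(μ'.prod ν) :=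
    integral_prod_comp_eq_of_map_eq measurable_fst h₁
      (g := fun x : ℝ × Bid => x.1 * winProb T.t1 x.1 x.2.1) (by fun_prop)
  have e₂ : ∫ p, p.1.2 * q2 T p.1 p.2 ∂(μ.prod ν) = ∫ p, p.1.2 * q2 T p.1 p.2 ∂(μ'.prod ν) :=
    integral_prod_comp_eq_of_map_eq measurable_snd h₂
      (g := fun x : ℝ × Bid => x.1 * winProb T.t2 x.1 x.2.2) (by fun_prop)
  rw [UAnd, UAnd, integral_uAnd hμ, integral_uAnd hμ', e₁, e₂]
  ring

lemma UOr_sub_UOr [IsProbabilityMeasure μ] [IsProbabilityMeasure μ'] [IsProbabilityMeasure ν]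
    (hν : Integrable id ν) (v : ℝ)
    (h₁ : μ.map Prod.fst = μ'.map Prod.fst) (h₂ : μ.map Prod.snd = μ'.map Prod.snd) :
    UOr v T μ ν - UOr v T μ' ν = v * (∫ p, q1 T p.1 p.2 * q2 T p.1 p.2 ∂(μ'.prod ν) -
      ∫ p, q1 T p.1 p.2 * q2 T p.1 p.2 ∂(μ.prod ν)) := by
  have e₁ : ∫ p, p.2.1 * (1 - q1 T p.1 p.2) ∂(μ.prod ν) =
      ∫ p, p.2.1 * (1 - q1 T p.1 p.2) ∂(μ'.prod ν) :=
    integral_prod_comp_eq_of_map_eq measurable_fst h₁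
      (g := fun x : ℝ × Bid => x.2.1 * (1 - winProb T.t1 x.1 x.2.1)) (by fun_prop)
  have e₂ : ∫ p, p.2.2 * (1 - q2 T p.1 p.2) ∂(μ.prod ν) =
      ∫ p, p.2.2 * (1 - q2 T p.1 p.2) ∂(μ'.prod ν) :=
    integral_prod_comp_eq_of_map_eq measurable_snd h₂
      (g := fun x : ℝ × Bid => x.2.2 * (1 - winProb T.t2 x.1 x.2.2)) (by fun_prop)
  rw [UOr, UOr, integral_uOr hν, integral_uOr hν, e₁, e₂]
  ring

lemma integral_one_sub_q1_mul_one_sub_q2_sub [IsProbabilityMeasure μ] [IsProbabilityMeasure μ']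
    [IsProbabilityMeasure ν]
    (h₁ : μ.map Prod.fst = μ'.map Prod.fst) (h₂ : μ.map Prod.snd = μ'.map Prod.snd) :
    ∫ p, (1 - q1 T p.1 p.2) * (1 - q2 T p.1 p.2) ∂(μ.prod ν) -
      ∫ p, (1 - q1 T p.1 p.2) * (1 - q2 T p.1 p.2) ∂(μ'.prod ν) =
      ∫ p, q1 T p.1 p.2 * q2 T p.1 p.2 ∂(μ.prod ν) -
      ∫ p, q1 T p.1 p.2 * q2 T p.1 p.2 ∂(μ'.prod ν) := by
  have e₁ : ∫ p, q1 T p.1 p.2 ∂(μ.prod ν) = ∫ p, q1 T p.1 p.2 ∂(μ'.prod ν) :=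
    integral_prod_comp_eq_of_map_eq measurable_fst h₁
      (g := fun x : ℝ × Bid => winProb T.t1 x.1 x.2.1) (by fun_prop)
  have e₂ : ∫ p, q2 T p.1 p.2 ∂(μ.prod ν) = ∫ p, q2 T p.1 p.2 ∂(μ'.prod ν) :=
    integral_prod_comp_eq_of_map_eq measurable_snd h₂
      (g := fun x : ℝ × Bid => winProb T.t2 x.1 x.2.2) (by fun_prop)
  rw [integral_one_sub_q1_mul_one_sub_q2, integral_one_sub_q1_mul_one_sub_q2, e₁, e₂]
  ring

end Marginals

/-- If `μ` and `μ'` are mixed strategies for AND with identical marginal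
distributions, then for every mixed strategy `ν` of OR the five stated conditions are
equivalent. -/
theorem identical_marginals_equiv (v : ℝ) (hv : 1/2 < v) (T : TieRule)
    (μ μ' : Measure Bid) (hμ : IsMixed v μ) (hμ' : IsMixed v μ')
    (h1 : Measure.map Prod.fst μ = Measure.map Prod.fst μ')
    (h2 : Measure.map Prod.snd μ = Measure.map Prod.snd μ')
    (ν : Measure Bid) (hν : IsMixed v ν) :
    ((UAnd T μ ν ≤ UAnd T μ' ν) ↔ (UOr v T μ' ν ≤ UOr v T μ ν)) ∧
    ((UAnd T μ ν ≤ UAnd T μ' ν) ↔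
      (∫ p, q1 T p.1 p.2 * q2 T p.1 p.2 ∂(μ.prod ν) ≤
        ∫ p, q1 T p.1 p.2 * q2 T p.1 p.2 ∂(μ'.prod ν))) ∧
    ((UAnd T μ ν ≤ UAnd T μ' ν) ↔
      (∫ p, (1 - q1 T p.1 p.2 * q2 T p.1 p.2) ∂(μ'.prod ν) ≤
        ∫ p, (1 - q1 T p.1 p.2 * q2 T p.1 p.2) ∂(μ.prod ν))) ∧
    ((UAnd T μ ν ≤ UAnd T μ' ν) ↔
      (∫ p, (1 - q1 T p.1 p.2) * (1 - q2 T p.1 p.2) ∂(μ.prod ν) ≤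
        ∫ p, (1 - q1 T p.1 p.2) * (1 - q2 T p.1 p.2) ∂(μ'.prod ν))) := by
  have := hμ.1; have := hμ'.1; have := hν.1
  have h_and := UAnd_sub_UAnd (T := T) (ν := ν) hμ.integrable_id hμ'.integrable_id h1 h2
  have h_or := UOr_sub_UOr (T := T) hν.integrable_id v h1 h2
  have h_none := integral_one_sub_q1_mul_one_sub_q2_sub (T := T) (ν := ν) h1 h2
  have h_some := integral_one_sub_q1_mul_q2 (T := T) (ρ := μ.prod ν)
  have h_some' := integral_one_sub_q1_mul_q2 (T := T) (ρ := μ'.prod ν)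
  have hv₀ : 0 < v := by linarith
  refine ⟨⟨fun h => ?_, fun h => ?_⟩, ?_, ?_, ?_⟩
  · rw [← sub_nonneg, h_or]
    exact mul_nonneg hv₀.le (by linarith)
  · rw [← sub_nonneg, h_or, mul_nonneg_iff_of_pos_left hv₀] at h
    linarith
  all_goals constructor <;> intro <;> linarith
end
end
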